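/- arXiv:2402.00454 — 3 statements merged into one kernel-verified Lean document; each statement's English description precedes it below -/
import Mathlib

section
/- Let H₀ > 0, B_C > 0, θ ≥ 0, m ≥ 0 with θ + m > 0. Define f(b) = B_C·(θ + m)·b·(1 − b) / (B_C·(1 − b) + H₀·b) and b⋆ = √(B_C/H₀)/(1 + √(B_C/H₀)). Then f is strictly increasing on the interval [0, b⋆]. -/
/-- The expected unfunded payoff of a high-belief agent is strictly increasing
on `[0, b⋆]`. -/
theorem high_belief_unfunded_payoff_strictMonoOn
    (H₀ B_C θ m : ℝ)
    (hH : 0 < H₀) (hB : 0 < B_C) (hθ : 0 ≤ θ) (hm : 0 ≤ m)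
    (hθm : 0 < θ + m) :
    StrictMonoOn (fun b : ℝ => B_C * (θ + m) * b * (1 - b) / (B_C * (1 - b) + H₀ * b))
      (Set.Icc (0 : ℝ) (Real.sqrt (B_C / H₀) / (1 + Real.sqrt (B_C / H₀)))) := by
  have hBH : 0 < B_C / H₀ := div_pos hB hH
  set r := Real.sqrt (B_C / H₀) with hr
  have hr0 : 0 < r := Real.sqrt_pos.2 hBH
  have hr2 : r ^ 2 = B_C / H₀ := Real.sq_sqrt hBH.le
  have hr2' : H₀ * r ^ 2 = B_C := by
    rw [hr2]; field_simp
  clear_value r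
  have h1r : 0 < 1 + r := by linarith
  set s := r / (1 + r) with hs
  clear_value s
  have hs_pos : 0 < s := by rw [hs]; exact div_pos hr0 h1r
  have hs_lt1 : s < 1 := by rw [hs, div_lt_one h1r]; linarith
  have hseq : s * (1 + r) = r := by rw [hs]; field_simp
  have hkey_eq : B_C * (1 - s) ^ 2 = H₀ * s ^ 2 := by
    rw [hs]
    field_simp
    linear_combination -hr2'
  intro x hx y hy hxy
  obtain ⟨hx0, hxs⟩ := hx
  obtain ⟨hy0, hys⟩ := hy
  have hxs' : x < s := lt_of_lt_of_le hxy hys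
  have hy1 : y < 1 := lt_of_le_of_lt hys hs_lt1
  have hx1 : x < 1 := lt_trans hxy hy1
  have hDx : 0 < B_C * (1 - x) + H₀ * x := by
    have : 0 < B_C * (1 - x) := mul_pos hB (by linarith)
    nlinarith
  have hDy : 0 < B_C * (1 - y) + H₀ * y := by
    have : 0 < B_C * (1 - y) := mul_pos hB (by linarith)
    nlinarith
  have hkey : 0 < B_C * (1 - x) * (1 - y) - H₀ * x * y := by
    have hxy_le : x * y ≤ s * s := mul_le_mul hxs'.le hys hy0 hs_pos.le
    have h1 : H₀ * (x * y) ≤ H₀ * (s * s) := mul_le_mul_of_nonneg_left hxy_le hH.le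
    have h3 : (1 - s) * (1 - s) < (1 - x) * (1 - y) := by
      have a1 : 1 - s < 1 - x := by linarith
      have a2 : 1 - s ≤ 1 - y := by linarith
      have a3 : 0 < 1 - s := by linarith
      nlinarith
    have h2 : B_C * ((1 - s) * (1 - s)) < B_C * ((1 - x) * (1 - y)) :=
      mul_lt_mul_of_pos_left h3 hB
    have e1 : B_C * ((1 - s) * (1 - s)) = H₀ * (s * s) := by linear_combination hkey_eq
    linarith
  simp only
  rw [div_lt_div_iff₀ hDx hDy]
  have hpos : 0 < B_C * (θ + m) * ((y - x) * (B_C * (1 - x) * (1 - y) - H₀ * x * y)) :=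
    mul_pos (mul_pos hB hθm) (mul_pos (sub_pos.2 hxy) hkey)
  have heq : B_C * (θ + m) * y * (1 - y) * (B_C * (1 - x) + H₀ * x)
      - B_C * (θ + m) * x * (1 - x) * (B_C * (1 - y) + H₀ * y)
      = B_C * (θ + m) * ((y - x) * (B_C * (1 - x) * (1 - y) - H₀ * x * y)) := by
    ring
  linarith
end

section
/- Let H₀ > 0, B_C > 0, θ ≥ 0, m ≥ 0 with θ + m > 0. Define f(b) = B_C·(θ + m)·b·(1 − b) / (B_C·(1 − b) + H₀·b) and b⋆ = √(B_C/H₀)/(1 + √(B_C/H₀)). Then f is strictly decreasing on the interval [b⋆, 1]. -/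
/-- The expected unfunded payoff of a high-belief agent is strictly decreasing
on `[b⋆, 1]`. -/
theorem high_belief_unfunded_payoff_strictAntiOn
    (H₀ B_C θ m : ℝ)
    (hH : 0 < H₀) (hB : 0 < B_C) (hθ : 0 ≤ θ) (hm : 0 ≤ m)
    (hθm : 0 < θ + m) :
    StrictAntiOn (fun b : ℝ => B_C * (θ + m) * b * (1 - b) / (B_C * (1 - b) + H₀ * b))
      (Set.Icc (Real.sqrt (B_C / H₀) / (1 + Real.sqrt (B_C / H₀))) 1) := by
  intro x hx y hy hxy
  set s := Real.sqrt (B_C / H₀) with hs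
  have hs0 : 0 < s := Real.sqrt_pos.mpr (div_pos hB hH)
  have hs1 : (0:ℝ) < 1 + s := by linarith
  have hsH : 0 < Real.sqrt H₀ := Real.sqrt_pos.mpr hH
  have hsB : 0 < Real.sqrt B_C := Real.sqrt_pos.mpr hB
  have hsdiv : s * Real.sqrt H₀ = Real.sqrt B_C := by
    rw [hs, Real.sqrt_div hB.le, div_mul_cancel₀]
    exact ne_of_gt hsH
  -- key: for z ≥ b⋆ (resp >), √B_C(1-z) ≤ √H₀ z
  have key : ∀ z : ℝ, s / (1 + s) ≤ z → Real.sqrt B_C * (1 - z) ≤ Real.sqrt H₀ * z := by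
    intro z hz
    have h1 : s ≤ z * (1 + s) := by
      rw [div_le_iff₀ hs1] at hz; linarith
    have h2 : s * (1 - z) ≤ z := by nlinarith
    calc Real.sqrt B_C * (1 - z) = Real.sqrt H₀ * (s * (1 - z)) := by
          rw [← hsdiv]; ring
      _ ≤ Real.sqrt H₀ * z := by nlinarith
  have keylt : Real.sqrt B_C * (1 - y) < Real.sqrt H₀ * y := by
    have hz : s / (1 + s) < y := lt_of_le_of_lt hx.1 hxy
    have h1 : s < y * (1 + s) := by
      rw [div_lt_iff₀ hs1] at hz; linarith
    have h2 : s * (1 - y) < y := by nlinarith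
    calc Real.sqrt B_C * (1 - y) = Real.sqrt H₀ * (s * (1 - y)) := by
          rw [← hsdiv]; ring
      _ < Real.sqrt H₀ * y := by nlinarith
  have hxpos : 0 < x := lt_of_lt_of_le (div_pos hs0 hs1) hx.1
  have hypos : 0 < y := lt_trans hxpos hxy
  have hx1 : x ≤ 1 := hx.2
  have hy1 : y ≤ 1 := hy.2
  have hkx := key x hx.1
  -- main inequality: H₀ x y > B_C (1-x)(1-y)
  have hmain : B_C * (1 - x) * (1 - y) < H₀ * (x * y) := by
    have hbx : 0 ≤ Real.sqrt B_C * (1 - x) := mul_nonneg hsB.le (by linarith)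
    have hxx : 0 < Real.sqrt H₀ * x := mul_pos hsH hxpos
    have hby : 0 ≤ Real.sqrt B_C * (1 - y) := mul_nonneg hsB.le (by linarith)
    have hmul : (Real.sqrt B_C * (1 - x)) * (Real.sqrt B_C * (1 - y))
        < (Real.sqrt H₀ * x) * (Real.sqrt H₀ * y) :=
      mul_lt_mul' hkx keylt hby hxx
    have hB2 : Real.sqrt B_C * Real.sqrt B_C = B_C := Real.mul_self_sqrt hB.le
    have hH2 : Real.sqrt H₀ * Real.sqrt H₀ = H₀ := Real.mul_self_sqrt hH.le
    have e1 : (Real.sqrt B_C * (1 - x)) * (Real.sqrt B_C * (1 - y))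
        = B_C * (1 - x) * (1 - y) := by
      rw [show (Real.sqrt B_C * (1 - x)) * (Real.sqrt B_C * (1 - y))
        = (Real.sqrt B_C * Real.sqrt B_C) * ((1 - x) * (1 - y)) from by ring, hB2]; ring
    have e2 : (Real.sqrt H₀ * x) * (Real.sqrt H₀ * y) = H₀ * (x * y) := by
      rw [show (Real.sqrt H₀ * x) * (Real.sqrt H₀ * y)
        = (Real.sqrt H₀ * Real.sqrt H₀) * (x * y) from by ring, hH2]
    linarith
  have hDx : 0 < B_C * (1 - x) + H₀ * x := by nlinarith
  have hDy : 0 < B_C * (1 - y) + H₀ * y := by nlinarith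
  show B_C * (θ + m) * y * (1 - y) / (B_C * (1 - y) + H₀ * y)
      < B_C * (θ + m) * x * (1 - x) / (B_C * (1 - x) + H₀ * x)
  rw [div_lt_div_iff₀ hDy hDx]
  nlinarith [mul_pos (mul_pos hB hθm) (mul_pos (sub_pos.mpr hxy) (sub_pos.mpr hmain))]
end

section
/- Let H₀ > 0, B_C > 0, θ ≥ 0, m ≥ 0 with θ + m > 0. Define f(b) = B_C·(θ + m)·b·(1 − b) / (B_C·(1 − b) + H₀·b) and b⋆ = √(B_C/H₀)/(1 + √(B_C/H₀)). Then f(b) < f(b⋆) for every b ∈ [0,1] with b ≠ b⋆; that is, the expected unfunded payoff of a high-belief agent is maximized over beliefs in [0,1] uniquely at the critical belief b⋆. -/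
/-- The expected unfunded payoff of a high-belief agent is uniquely maximized
over beliefs in [0,1] at the critical belief `b⋆`. -/
theorem high_belief_unfunded_payoff_unique_max
    (H₀ B_C θ m : ℝ)
    (hH : 0 < H₀) (hB : 0 < B_C) (hθ : 0 ≤ θ) (hm : 0 ≤ m)
    (hθm : 0 < θ + m) :
    ∀ b ∈ Set.Icc (0 : ℝ) 1,
      b ≠ Real.sqrt (B_C / H₀) / (1 + Real.sqrt (B_C / H₀)) →
        B_C * (θ + m) * b * (1 - b) / (B_C * (1 - b) + H₀ * b) <
          B_C * (θ + m) * (Real.sqrt (B_C / H₀) / (1 + Real.sqrt (B_C / H₀))) *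
              (1 - Real.sqrt (B_C / H₀) / (1 + Real.sqrt (B_C / H₀))) /
            (B_C * (1 - Real.sqrt (B_C / H₀) / (1 + Real.sqrt (B_C / H₀))) +
              H₀ * (Real.sqrt (B_C / H₀) / (1 + Real.sqrt (B_C / H₀)))) := by
  intro b hb hne
  set s := Real.sqrt (B_C / H₀) with hs_def
  have hs : 0 < s := Real.sqrt_pos.mpr (div_pos hB hH)
  have hs2 : s ^ 2 = B_C / H₀ := Real.sq_sqrt (div_pos hB hH).le
  have hBC : B_C = H₀ * s ^ 2 := by rw [hs2]; field_simp
  have h1s : 0 < 1 + s := by linarith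
  obtain ⟨hb0, hb1⟩ := hb
  -- the RHS simplifies to (θ+m)*s^2/(1+s)^2
  have hrhs :
      B_C * (θ + m) * (s / (1 + s)) * (1 - s / (1 + s)) /
        (B_C * (1 - s / (1 + s)) + H₀ * (s / (1 + s)))
        = (θ + m) * s ^ 2 / (1 + s) ^ 2 := by
    rw [hBC]
    rw [div_eq_div_iff]
    · ring_nf
      field_simp
      ring
    · have : H₀ * s ^ 2 * (1 - s / (1 + s)) + H₀ * (s / (1 + s)) = H₀ * s := by
        field_simp; ring
      rw [this]; positivity
    · positivity
  rw [hrhs]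
  -- denominator positivity
  have hD : 0 < B_C * (1 - b) + H₀ * b := by
    rcases eq_or_lt_of_le hb0 with h | h
    · rw [← h]; simpa using hB
    · have := mul_nonneg hB.le (by linarith : (0:ℝ) ≤ 1 - b)
      nlinarith [mul_pos hH h]
  -- key: s*(1-b) ≠ b since b ≠ s/(1+s)
  have hkey : s * (1 - b) - b ≠ 0 := by
    intro h
    apply hne
    field_simp
    linarith
  have hE : 0 < (s * (1 - b) - b) ^ 2 := by positivity
  rw [div_lt_div_iff₀ hD (by positivity)]
  rw [hBC]
  nlinarith [mul_pos (mul_pos hθm (mul_pos hH (mul_pos hs hs))) hE]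
end
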